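/- arXiv:1707.08241 — 4 statements merged into one kernel-verified Lean document; each statement's English description precedes it below -/
import Mathlib

section
/- limsup_I Δ_i is consistent if and only if there exists i ∈ I such that Δ_j is consistent for all j ≥ i. -/
open FirstOrder Language

/-- A theory: a set of sentences closed under (semantic) logical consequence. -/
def IsClosedTheory {L : FirstOrder.Language} (Δ : L.Theory) : Prop :=
  ∀ θ : L.Sentence, Δ ⊨ᵇ θ → θ ∈ Δ

/-- `limsup` of a family of theories: frequent membership. -/
def limsupTheory {L : FirstOrder.Language} {ι : Type*} [Preorder ι]
    (Δ : ι → L.Theory) : L.Theory :=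
  { θ | ∀ i, ∃ j, i ≤ j ∧ θ ∈ Δ j }

/-- `liminf` of a family of theories: eventual membership. -/
def liminfTheory {L : FirstOrder.Language} {ι : Type*} [Preorder ι]
    (Δ : ι → L.Theory) : L.Theory :=
  { θ | ∃ i, ∀ j, i ≤ j → θ ∈ Δ j }

/-- A theory is consistent when it is not the set of all sentences. -/
def ConsistentTheory {L : FirstOrder.Language} (Δ : L.Theory) : Prop :=
  Δ ≠ Set.univ

/-- A theory is complete when it contains each sentence or its negation. -/
def CompleteTheory' {L : FirstOrder.Language} (Δ : L.Theory) : Prop :=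
  ∀ θ : L.Sentence, θ ∈ Δ ∨ θ.not ∈ Δ

theorem limsupTheory_consistent_iff {L : FirstOrder.Language} {ι : Type*}
    [PartialOrder ι] [IsDirected ι (· ≤ ·)] [Nonempty ι]
    (Δ : ι → L.Theory) (hΔ : ∀ i, IsClosedTheory (Δ i)) :
    ConsistentTheory (limsupTheory Δ) ↔ ∃ i, ∀ j, i ≤ j → ConsistentTheory (Δ j) := by
  have key : ∀ (T : L.Theory), IsClosedTheory T → ((⊥ : L.Sentence) ∈ T → T = Set.univ) := by
    intro T hT hbot
    ext θ
    simp only [Set.mem_univ, iff_true]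
    apply hT
    intro M v xs
    exact absurd (M.is_model.realize_of_mem _ hbot) (by simp [Sentence.Realize])
  constructor
  · intro hcons
    by_contra h
    push_neg at h
    apply hcons
    ext θ
    simp only [Set.mem_univ, iff_true]
    intro i
    obtain ⟨j, hij, hj⟩ := h i
    rw [ConsistentTheory, not_not] at hj
    exact ⟨j, hij, by rw [hj]; trivial⟩
  · rintro ⟨i, hi⟩ hlim
    have : (⊥ : L.Sentence) ∈ limsupTheory Δ := by rw [hlim]; trivial
    obtain ⟨j, hij, hj⟩ := this i
    exact hi j hij (key (Δ j) (hΔ j) hj)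
end

section
/- Let Δ be a complete theory and suppose there is a directed family of theories {Δ_i}_{i∈I} with Γ ⊆ Δ_i for all i, Δ_i ≠ Δ for all i, and lim_I Δ_i = Δ (limsup and liminf both equal Δ). Then Γ ⊆ Δ and Δ is not finitely axiomatizable modulo Γ. -/
open FirstOrder Language

/-- The set of logical consequences of a set of sentences. -/
def consequences {L : FirstOrder.Language} (T : L.Theory) : L.Theory :=
  { θ | T ⊨ᵇ θ }

/-- `Δ` is finitely axiomatizable modulo `Γ`. -/
def FinitelyAxModulo {L : FirstOrder.Language} (Δ Γ : L.Theory) : Prop :=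
  ∃ Sig : Finset L.Sentence, consequences (Γ ∪ ↑Sig) = Δ

lemma models_mono {L : FirstOrder.Language} {T T' : L.Theory} (h : T ⊆ T')
    {θ : L.Sentence} (hθ : T ⊨ᵇ θ) : T' ⊨ᵇ θ := by
  rw [Theory.models_sentence_iff] at *
  intro M
  haveI : M ⊨ T := (M.is_model).mono h
  exact hθ ⟨M⟩

lemma models_of_inconsistent {L : FirstOrder.Language} {T : L.Theory}
    {θ : L.Sentence} (h1 : θ ∈ T) (h2 : θ.not ∈ T) (ψ : L.Sentence) : T ⊨ᵇ ψ := by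
  rw [Theory.models_sentence_iff]
  intro M
  have r1 : M ⊨ θ := M.is_model.realize_of_mem θ h1
  have r2 : M ⊨ θ.not := M.is_model.realize_of_mem _ h2
  rw [Sentence.realize_not] at r2
  exact absurd r1 r2

theorem not_finitelyAxModulo_of_limit {L : FirstOrder.Language} {ι : Type*}
    [PartialOrder ι] [IsDirected ι (· ≤ ·)] [Nonempty ι]
    (Δ Γ : L.Theory) (hΔ : IsClosedTheory Δ) (hcom : CompleteTheory' Δ)
    (Δ' : ι → L.Theory) (hΔ' : ∀ i, IsClosedTheory (Δ' i))
    (hΓ : ∀ i, Γ ⊆ Δ' i) (hne : ∀ i, Δ' i ≠ Δ)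
    (hsup : limsupTheory Δ' = Δ) (hinf : liminfTheory Δ' = Δ) :
    Γ ⊆ Δ ∧ ¬ FinitelyAxModulo Δ Γ := by

  have hΓΔ : Γ ⊆ Δ := by
    intro θ hθ
    rw [← hinf]
    exact ⟨Classical.arbitrary ι, fun j _ => hΓ j hθ⟩
  refine ⟨hΓΔ, ?_⟩
  rintro ⟨Sig, hSig⟩
  classical
  -- each element of Sig is in Δ
  have hSigΔ : ∀ σ ∈ Sig, σ ∈ Δ := by
    intro σ hσ
    rw [← hSig]
    exact Theory.models_sentence_of_mem (Or.inr hσ)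
  -- choose indices
  let P : L.Sentence → Prop := fun σ => ∃ i, ∀ j, i ≤ j → σ ∈ Δ' j
  have hP : ∀ σ ∈ Sig, P σ := by
    intro σ hσ
    have : σ ∈ liminfTheory Δ' := by rw [hinf]; exact hSigΔ σ hσ
    exact this
  let g : L.Sentence → ι := fun σ => if h : P σ then h.choose else Classical.arbitrary ι
  obtain ⟨i₀, hi₀⟩ := (Sig.image g).exists_le
  -- for all j ≥ i₀, Δ ⊆ Δ' j and then Δ' j = Set.univ
  have hkey : ∀ j, i₀ ≤ j → Δ' j = Set.univ := by
    intro j hj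
    have hsub : Γ ∪ ↑Sig ⊆ Δ' j := by
      rintro σ (hσ | hσ)
      · exact hΓ j hσ
      · have hσ' : σ ∈ Sig := hσ
        have hps := hP σ hσ'
        have hg : g σ = hps.choose := dif_pos hps
        have : g σ ≤ j :=
          le_trans (hi₀ _ (Finset.mem_image_of_mem g hσ')) hj
        exact hps.choose_spec j (hg ▸ this)
    have hΔsub : Δ ⊆ Δ' j := by
      intro θ hθ
      rw [← hSig] at hθ
      exact hΔ' j θ (models_mono hsub hθ)
    obtain ⟨θ, hθj, hθΔ⟩ :=
      Set.exists_of_ssubset (hΔsub.ssubset_of_ne (Ne.symm (hne j)))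
    have hnotΔ : θ.not ∈ Δ := (hcom θ).resolve_left hθΔ
    have hnotj : θ.not ∈ Δ' j := hΔsub hnotΔ
    ext ψ
    simp only [Set.mem_univ, iff_true]
    exact hΔ' j ψ (models_of_inconsistent hθj hnotj ψ)
  -- Δ = limsup = univ
  have hΔuniv : Δ = Set.univ := by
    rw [← hsup]
    ext ψ
    simp only [Set.mem_univ, iff_true]
    intro k
    obtain ⟨j, hjk, hji⟩ := directed_of (· ≤ ·) k i₀
    exact ⟨j, hjk, by rw [hkey j hji]; trivial⟩
  exact hne i₀ (by rw [hkey i₀ le_rfl, hΔuniv])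
end

section
/- Let S = (ℚ, +, −, 0) and for each n ≥ 1 let S_n be the cyclic subgroup generated by 1/(p_1⋯p_n)^n, where p_1, p_2, … enumerates the primes. Then each S_n is isomorphic to ℤ as a group, hence lim_ℕ Th(S_n) = Th(ℤ); but the sentence ∀x ∃y (y + y = x) lies in Th(ℚ) and not in Th(ℤ), so lim_ℕ Th(S_n) ≠ Th(S). -/
open FirstOrder Language

/-- Function symbols of the language of (additive) abelian groups: `0`, `-`, `+`. -/
inductive abFunc : ℕ → Type
  | zero : abFunc 0
  | neg : abFunc 1
  | add : abFunc 2

/-- The first-order language of (additive) groups. -/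
def abLang : FirstOrder.Language := ⟨abFunc, fun _ => Empty⟩

/-- Every additive group is an `abLang`-structure in the obvious way. -/
instance abStructure (G : Type*) [SubtractionMonoid G] : abLang.Structure G where
  funMap | .zero => fun _ => 0
         | .neg => fun x => -x 0
         | .add => fun x => x 0 + x 1
  RelMap := fun r _ => r.elim

/-- The sentence `∀x ∃y (y + y = x)`. -/
def halfSentence : abLang.Sentence :=
  ∀' ∃' (Term.bdEqual (Functions.apply₂ (abFunc.add : abLang.Functions 2) &1 &1) &0)

/-- The cyclic subgroup of `ℚ` generated by `1/(p₁ ⋯ pₙ)ⁿ`. -/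
noncomputable def cyclicSub (n : ℕ) : AddSubgroup ℚ :=
  AddSubgroup.zmultiples (1 / (∏ i ∈ Finset.range n, ((Nat.nth Nat.Prime i : ℚ))) ^ n)

/-- An additive equivalence gives an `abLang`-equivalence. -/
def abEquivOfAddEquiv {G H : Type*} [AddGroup G] [AddGroup H]
    (e : G ≃+ H) : abLang.Equiv G H where
  toEquiv := e.toEquiv
  map_fun' := by
    intro n f x
    cases f with
    | zero => exact map_zero e
    | neg => exact map_neg e _
    | add => exact map_add e _ _
  map_rel' := fun r => r.elim

lemma completeTheory_eq_of_addEquiv {G H : Type*} [AddGroup G] [AddGroup H]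
    (e : G ≃+ H) : abLang.completeTheory G = abLang.completeTheory H :=
  (abEquivOfAddEquiv e).toElementaryEmbedding.elementarilyEquivalent

lemma zmultiples_addEquiv_int (a : ℚ) (ha : a ≠ 0) :
    Nonempty (↥(AddSubgroup.zmultiples a) ≃+ ℤ) := by
  refine ⟨(AddEquiv.ofBijective
      ({ toFun := fun k => ⟨k • a, AddSubgroup.zsmul_mem _ (AddSubgroup.mem_zmultiples a) k⟩,
         map_zero' := by ext; simp,
         map_add' := by
           intro x y; ext
           simp only [zsmul_eq_mul, AddSubgroup.coe_add]
           push_cast; ring } : ℤ →+ ↥(AddSubgroup.zmultiples a))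
      ⟨?_, ?_⟩).symm⟩
  · intro x y hxy
    have : (x : ℚ) * a = (y : ℚ) * a := by
      simpa [zsmul_eq_mul] using congrArg (Subtype.val) hxy
    exact_mod_cast mul_right_cancel₀ ha this
  · rintro ⟨x, k, rfl⟩
    exact ⟨k, rfl⟩

lemma gen_ne_zero (n : ℕ) :
    (1 / (∏ i ∈ Finset.range n, ((Nat.nth Nat.Prime i : ℚ))) ^ n) ≠ 0 := by
  apply one_div_ne_zero
  apply pow_ne_zero
  apply Finset.prod_ne_zero_iff.2
  intro i _
  exact_mod_cast (Nat.prime_nth_prime i).pos.ne'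

lemma cyclicSub_equiv_int (n : ℕ) : Nonempty (↥(cyclicSub n) ≃+ ℤ) :=
  zmultiples_addEquiv_int _ (gen_ne_zero n)

lemma theory_eq (n : ℕ) :
    abLang.completeTheory ↥(cyclicSub n) = abLang.completeTheory ℤ :=
  completeTheory_eq_of_addEquiv (cyclicSub_equiv_int n).some

theorem limit_cyclic_subgroups_ne_theory_of_rat :
    (∀ n : ℕ, 1 ≤ n → Nonempty (↥(cyclicSub n) ≃+ ℤ)) ∧
    limsupTheory (fun n : ℕ => abLang.completeTheory ↥(cyclicSub n)) =
      abLang.completeTheory ℤ ∧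
    liminfTheory (fun n : ℕ => abLang.completeTheory ↥(cyclicSub n)) =
      abLang.completeTheory ℤ ∧
    halfSentence ∈ abLang.completeTheory ℚ ∧
    halfSentence ∉ abLang.completeTheory ℤ ∧
    limsupTheory (fun n : ℕ => abLang.completeTheory ↥(cyclicSub n)) ≠
      abLang.completeTheory ℚ := by
  have hls : limsupTheory (fun n : ℕ => abLang.completeTheory ↥(cyclicSub n)) =
      abLang.completeTheory ℤ := by
    ext θ
    constructor
    · rintro h
      obtain ⟨j, -, hj⟩ := h 0
      have hj' : θ ∈ abLang.completeTheory ↥(cyclicSub j) := hj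
      rwa [theory_eq j] at hj'
    · intro h i
      refine ⟨i, le_refl i, ?_⟩
      show θ ∈ abLang.completeTheory ↥(cyclicSub i)
      rwa [theory_eq i]
  have hQ : halfSentence ∈ abLang.completeTheory ℚ := by
    rw [mem_completeTheory, halfSentence]
    simp only [Sentence.Realize, Formula.Realize, BoundedFormula.realize_all,
      BoundedFormula.realize_ex, BoundedFormula.realize_bdEqual, Term.realize_functions_apply₂,
      Term.realize_var, Fin.snoc]
    intro x
    refine ⟨x / 2, ?_⟩
    simp
    show x / 2 + x / 2 = x
    ring
  have hZ : halfSentence ∉ abLang.completeTheory ℤ := by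
    rw [mem_completeTheory, halfSentence]
    simp only [Sentence.Realize, Formula.Realize, BoundedFormula.realize_all,
      BoundedFormula.realize_ex, BoundedFormula.realize_bdEqual, Term.realize_functions_apply₂,
      Term.realize_var, Fin.snoc]
    intro h
    obtain ⟨y, hy⟩ := h 1
    simp at hy
    replace hy : y + y = 1 := hy
    omega
  refine ⟨fun n _ => cyclicSub_equiv_int n, hls, ?_, hQ, hZ, ?_⟩
  · ext θ
    constructor
    · rintro ⟨i, h⟩
      have hj' : θ ∈ abLang.completeTheory ↥(cyclicSub i) := h i (le_refl i)
      rwa [theory_eq i] at hj'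
    · intro h
      refine ⟨0, fun j _ => ?_⟩
      show θ ∈ abLang.completeTheory ↥(cyclicSub j)
      rwa [theory_eq j]
  · rw [hls]
    intro h
    rw [h] at hZ
    exact hZ hQ
end

section
/- Let {S_i}_{i∈I} be a directed family of substructures of S with union S. Suppose for every finite list a_1,…,a_m ∈ S there is i ∈ I with a_1,…,a_m ∈ S_i such that for all j ≥ i there is an isomorphism f : S → S_j fixing each a_k. Then lim_I Th(S_i^*) = Th(S^*). -/
open FirstOrder Language

/-- The augmented theory of a substructure `N` of `M`, viewed inside the set of
sentences of `L[[M]]`: those sentences all of whose parameters come from `N`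
(i.e. which are images of sentences of `L[[N]]`) and which are true in `N`. -/
def augTheory {L : FirstOrder.Language} {M : Type*} [L.Structure M]
    (N : L.Substructure M) : (L[[M]]).Theory :=
  { φ | ∃ ψ : (L[[↥N]]).Sentence,
      (L.lhomWithConstantsMap (Subtype.val : ↥N → M)).onSentence ψ = φ ∧ ↥N ⊨ ψ }

/-! Fix a sentence `φ` of `L[[M]]` and apply the hypothesis to the finitely many constants
occurring in `φ`: for all large `j` there is an isomorphism `f : M ≃ S j` fixing them. Renaming
the constants of `φ` along `f` gives an `L[[S j]]`-sentence whose image in `L[[M]]` is `φ` again,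
and for any `L[[S j]]`-sentence `ψ` with image `φ`, the map `f ∘ val` fixes the constants of `ψ`,
so transporting along `f` gives `S j ⊨ ψ ↔ M ⊨ φ`. Hence `φ ∈ augTheory (S j) ↔ M ⊨ φ` for all
large `j`, and both limits are the complete theory of `M`. -/

namespace FirstOrder.Language

variable {L : Language} {α β γ δ : Type*}

def Term.constants : L[[α]].Term δ → List α
  | var _ => []
  | func (Sum.inl _) ts => (List.ofFn fun i => (ts i).constants).flatten
  | @func _ _ 0 (Sum.inr c) _ => [c]
  | @func _ _ (_ + 1) (Sum.inr c) _ => isEmptyElim c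

def BoundedFormula.constants : ∀ {n : ℕ}, L[[α]].BoundedFormula δ n → List α
  | _, falsum => []
  | _, equal t₁ t₂ => t₁.constants ++ t₂.constants
  | _, rel _ ts => (List.ofFn fun i => (ts i).constants).flatten
  | _, imp φ₁ φ₂ => φ₁.constants ++ φ₂.constants
  | _, all φ => φ.constants

@[simp]
theorem lhomWithConstantsMap_onFunction_inl (g : α → β) {n : ℕ} (f : L.Functions n) :
    (L.lhomWithConstantsMap g).onFunction (Sum.inl f) = Sum.inl f :=
  rfl

@[simp]
theorem lhomWithConstantsMap_onRelation_inl (g : α → β) {n : ℕ} (R : L.Relations n) :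
    (L.lhomWithConstantsMap g).onRelation (Sum.inl R) = Sum.inl R :=
  rfl

theorem Term.constants_onTerm (g : α → β) (t : L[[α]].Term δ) :
    ((L.lhomWithConstantsMap g).onTerm t).constants = t.constants.map g := by
  induction t with
  | var => rfl
  | @func n f ts ih =>
    rcases f with f | c
    · simp only [LHom.onTerm, constants, List.map_flatten, List.map_ofFn, ih,
        lhomWithConstantsMap_onFunction_inl, Function.comp_def]
    · cases n with
      | zero => rfl
      | succ n => exact isEmptyElim c

theorem BoundedFormula.constants_onBoundedFormula (g : α → β) {n : ℕ}
    (φ : L[[α]].BoundedFormula δ n) :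
    ((L.lhomWithConstantsMap g).onBoundedFormula φ).constants = φ.constants.map g := by
  induction φ with
  | falsum => rfl
  | equal t₁ t₂ =>
    simp only [LHom.onBoundedFormula, Term.bdEqual, constants, Term.constants_onTerm,
      List.map_append]
  | @rel n l R ts =>
    rcases R with R | R
    · simp only [LHom.onBoundedFormula, constants, List.map_flatten, List.map_ofFn,
        Term.constants_onTerm, lhomWithConstantsMap_onRelation_inl, Function.comp_def,
        Relations.boundedFormula]
    · exact isEmptyElim R
  | imp φ₁ φ₂ ih₁ ih₂ => simp only [LHom.onBoundedFormula, constants, ih₁, ih₂, List.map_append]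
  | all φ ih => simpa only [LHom.onBoundedFormula, constants] using ih

theorem Term.onTerm_eq_self (k : α → α) (t : L[[α]].Term δ) (h : ∀ c ∈ t.constants, k c = c) :
    (L.lhomWithConstantsMap k).onTerm t = t := by
  induction t with
  | var => rfl
  | @func n f ts ih =>
    rcases f with f | c
    · simp only [LHom.onTerm, lhomWithConstantsMap_onFunction_inl]
      congr 1
      funext i
      exact ih i fun c hc => h c (List.mem_flatten_of_mem (List.mem_ofFn.2 ⟨i, rfl⟩) hc)
    · cases n with
      | zero =>
        have hc : (L.lhomWithConstantsMap k).onFunction (Sum.inr c) = Sum.inr c :=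
          congrArg Sum.inr (h c (List.mem_singleton_self c))
        simp only [LHom.onTerm, hc]
        exact congrArg _ (Subsingleton.elim _ _)
      | succ n => exact isEmptyElim c

theorem BoundedFormula.onBoundedFormula_eq_self (k : α → α) {n : ℕ}
    (φ : L[[α]].BoundedFormula δ n) (h : ∀ c ∈ φ.constants, k c = c) :
    (L.lhomWithConstantsMap k).onBoundedFormula φ = φ := by
  induction φ with
  | falsum => rfl
  | equal t₁ t₂ =>
    simp only [LHom.onBoundedFormula, Term.bdEqual]
    rw [Term.onTerm_eq_self k t₁ fun c hc => h c (List.mem_append_left _ hc),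
      Term.onTerm_eq_self k t₂ fun c hc => h c (List.mem_append_right _ hc)]
  | @rel n l R ts =>
    rcases R with R | R
    · simp only [LHom.onBoundedFormula, lhomWithConstantsMap_onRelation_inl]
      congr 1
      funext i
      exact Term.onTerm_eq_self k (ts i) fun c hc =>
        h c (List.mem_flatten_of_mem (List.mem_ofFn.2 ⟨i, rfl⟩) hc)
    · exact isEmptyElim R
  | imp φ₁ φ₂ ih₁ ih₂ =>
    simp only [LHom.onBoundedFormula]
    rw [ih₁ fun c hc => h c (List.mem_append_left _ hc),
      ih₂ fun c hc => h c (List.mem_append_right _ hc)]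
  | all φ ih => simp only [LHom.onBoundedFormula, ih h]

theorem lhomWithConstantsMap_comp (g' : β → γ) (g : α → β) :
    (L.lhomWithConstantsMap g').comp (L.lhomWithConstantsMap g) =
      L.lhomWithConstantsMap (g' ∘ g) := by
  refine LHom.funext (funext fun n => funext fun f => ?_) (funext fun n => funext fun R => ?_)
  · rcases f with f | c
    · rfl
    · cases n with
      | zero => rfl
      | succ n => exact isEmptyElim c
  · rcases R with R | R
    · rfl
    · exact isEmptyElim R

variable {A M N : Type*} [L.Structure A] [L.Structure M] [L.Structure N]

-- Reducible, so that at `v = id` it is the instance `withConstantsSelfStructure`.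
abbrev withConstantsStructureOf (v : α → A) : L[[α]].Structure A :=
  @withConstantsStructure L A _ α (constantsOn.structure v)

theorem realize_onSentence_lhomWithConstantsMap (g : α → β) (v : β → A) (φ : L[[α]].Sentence) :
    @Sentence.Realize _ A (withConstantsStructureOf v) ((L.lhomWithConstantsMap g).onSentence φ) ↔
      @Sentence.Realize _ A (withConstantsStructureOf (v ∘ g)) φ :=
  @LHom.realize_onSentence _ _ A (withConstantsStructureOf (v ∘ g)) (withConstantsStructureOf v) _
    (@LHom.sumMap_isExpansionOn _ _ _ _ _ (LHom.constantsOnMap g) A _ _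
      (constantsOn.structure (v ∘ g)) (constantsOn.structure v) _
      (constantsOnMap_isExpansionOn rfl)) φ

theorem Equiv.realize_sentence_withConstants (f : M ≃[L] N) (v : α → M) (φ : L[[α]].Sentence) :
    @Sentence.Realize _ M (withConstantsStructureOf v) φ ↔
      @Sentence.Realize _ N (withConstantsStructureOf (f ∘ v)) φ := by
  let := withConstantsStructureOf (L := L) v
  let := withConstantsStructureOf (L := L) (f ∘ v)
  let F : M ≃[L[[α]]] N :=
    { f.toEquiv with
      map_fun' := fun {n} g x => by
        rcases g with g | c
        · exact f.map_fun g x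
        · cases n with
          | zero => rfl
          | succ n => exact isEmptyElim c
      map_rel' := fun {n} R x => by
        rcases R with R | R
        · exact f.map_rel R x
        · exact isEmptyElim R }
  exact StrongHomClass.realize_sentence F φ

theorem mem_augTheory_iff_of_equiv {S : L.Substructure M} (f : M ≃[L] S)
    {φ : L[[M]].Sentence} (hf : ∀ c ∈ φ.constants, (f c : M) = c) :
    φ ∈ augTheory S ↔ M ⊨ φ := by
  have realize_iff (ψ : L[[S]].Sentence)
      (hψ : (L.lhomWithConstantsMap Subtype.val).onSentence ψ = φ) : S ⊨ ψ ↔ M ⊨ φ := by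
    have hfix : (L.lhomWithConstantsMap (f ∘ Subtype.val)).onSentence ψ = ψ := by
      refine BoundedFormula.onBoundedFormula_eq_self _ ψ fun c hc => Subtype.ext (hf c ?_)
      rw [← hψ, LHom.onSentence, LHom.onFormula, BoundedFormula.constants_onBoundedFormula]
      exact List.mem_map_of_mem hc
    calc S ⊨ ψ
        ↔ @Sentence.Realize _ S (withConstantsStructureOf id)
            ((L.lhomWithConstantsMap (f ∘ Subtype.val)).onSentence ψ) := by rw [hfix]
      _ ↔ @Sentence.Realize _ S (withConstantsStructureOf (f ∘ Subtype.val)) ψ :=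
        realize_onSentence_lhomWithConstantsMap _ _ ψ
      _ ↔ @Sentence.Realize _ S (withConstantsStructureOf f) φ := by
        rw [← hψ, realize_onSentence_lhomWithConstantsMap]
      _ ↔ M ⊨ φ := (f.realize_sentence_withConstants id φ).symm
  constructor
  · rintro ⟨ψ, hψ, hS⟩
    exact (realize_iff ψ hψ).1 hS
  · intro hM
    have hφ : (L.lhomWithConstantsMap Subtype.val).onSentence
        ((L.lhomWithConstantsMap f).onSentence φ) = φ := by
      simp only [LHom.onSentence, LHom.onFormula, ← Function.comp_apply
        (f := (L.lhomWithConstantsMap Subtype.val).onBoundedFormula), ← LHom.comp_onBoundedFormula,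
        lhomWithConstantsMap_comp]
      exact BoundedFormula.onBoundedFormula_eq_self _ φ hf
    exact ⟨_, hφ, (realize_iff _ hφ).2 hM⟩

end FirstOrder.Language

section Limits

variable {L : FirstOrder.Language} {ι : Type*} [Preorder ι] [IsDirected ι (· ≤ ·)]
  {Δ : ι → L.Theory} {T : L.Theory}

theorem limsupTheory_eq_of_eventually (h : ∀ θ, ∃ i, ∀ j, i ≤ j → (θ ∈ Δ j ↔ θ ∈ T)) :
    limsupTheory Δ = T := by
  ext θ
  obtain ⟨i₀, hi₀⟩ := h θ
  constructor
  · intro hθ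
    obtain ⟨j, hj, hθj⟩ := hθ i₀
    exact (hi₀ j hj).1 hθj
  · intro hθ i
    obtain ⟨j, hij, hi₀j⟩ := directed_of (· ≤ ·) i i₀
    exact ⟨j, hij, (hi₀ j hi₀j).2 hθ⟩

theorem liminfTheory_eq_of_eventually (h : ∀ θ, ∃ i, ∀ j, i ≤ j → (θ ∈ Δ j ↔ θ ∈ T)) :
    liminfTheory Δ = T := by
  ext θ
  obtain ⟨i₀, hi₀⟩ := h θ
  constructor
  · rintro ⟨i, hi⟩
    obtain ⟨j, hij, hi₀j⟩ := directed_of (· ≤ ·) i i₀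
    exact (hi₀ j hi₀j).1 (hi j hij)
  · intro hθ
    exact ⟨i₀, fun j hj => (hi₀ j hj).2 hθ⟩

end Limits

theorem limit_augTheory_of_isomorphisms_fixing_finitely_many_general
    {L : FirstOrder.Language} {M : Type*} [L.Structure M] {ι : Type*}
    [PartialOrder ι] [IsDirected ι (· ≤ ·)]
    (S : ι → L.Substructure M)
    (hiso : ∀ (m : ℕ) (a : Fin m → M), ∃ i, (∀ k, a k ∈ S i) ∧
      ∀ j, i ≤ j → ∃ f : M ≃[L] ↥(S j), ∀ k, (f (a k) : M) = a k) :
    limsupTheory (fun i => augTheory (S i)) = (L[[M]]).completeTheory M ∧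
    liminfTheory (fun i => augTheory (S i)) = (L[[M]]).completeTheory M := by
  have eventually_mem_iff (φ : L[[M]].Sentence) : ∃ i, ∀ j, i ≤ j →
      (φ ∈ augTheory (S j) ↔ φ ∈ (L[[M]]).completeTheory M) := by
    obtain ⟨i, -, hi⟩ := hiso _ φ.constants.get
    refine ⟨i, fun j hij => ?_⟩
    obtain ⟨f, hf⟩ := hi j hij
    refine mem_augTheory_iff_of_equiv f fun c hc => ?_
    obtain ⟨k, rfl⟩ := List.get_of_mem hc
    exact hf k
  exact ⟨limsupTheory_eq_of_eventually eventually_mem_iff,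
    liminfTheory_eq_of_eventually eventually_mem_iff⟩

theorem limit_augTheory_of_isomorphisms_fixing_finitely_many
    {L : FirstOrder.Language} {M : Type*} [L.Structure M] {ι : Type*}
    [PartialOrder ι] [IsDirected ι (· ≤ ·)] [Nonempty ι]
    (S : ι → L.Substructure M)
    (horder : ∀ i j, i ≤ j ↔ S i ≤ S j)
    (hunion : ∀ x : M, ∃ i, x ∈ S i)
    (hiso : ∀ (m : ℕ) (a : Fin m → M), ∃ i, (∀ k, a k ∈ S i) ∧
      ∀ j, i ≤ j → ∃ f : M ≃[L] ↥(S j), ∀ k, (f (a k) : M) = a k) :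
    limsupTheory (fun i => augTheory (S i)) = (L[[M]]).completeTheory M ∧
    liminfTheory (fun i => augTheory (S i)) = (L[[M]]).completeTheory M :=
  limit_augTheory_of_isomorphisms_fixing_finitely_many_general S hiso
end
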